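/- arXiv:1505.01005 — 3 statements merged into one kernel-verified Lean document; each statement's English description precedes it below -/
import Mathlib

section
/- In the bad instance family for m machines, there exists a partition of the 3m jobs into m triples of jobs, one job from each rank, such that every triple has total processing time exactly 4m-1; hence the optimal makespan (over flowtime-optimal schedules) is 4m-1. -/
lemma stmt6_sum (m : ℕ) (hm : 2 ≤ m) (r1 r2 r3 : Fin m → ℕ)
    (h1 : ∀ i, r1 i = 2 * m - 1 + i)
    (h2 : ∀ i, r2 i = m + i)
    (h3 : ∀ i, r3 i = if i.val = 0 then m else 0)
    (σ2 σ3 : Equiv.Perm (Fin m)) :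
    ∑ i, (r1 i + r2 (σ2 i) + r3 (σ3 i)) = m * (4 * m - 1) := by
  obtain ⟨k, rfl⟩ : ∃ k, m = k + 2 := ⟨m - 2, by omega⟩
  have e : ∑ i, (r1 i + r2 (σ2 i) + r3 (σ3 i))
      = ∑ i, r1 i + ∑ i, r2 (σ2 i) + ∑ i, r3 (σ3 i) := by
    rw [Finset.sum_add_distrib, Finset.sum_add_distrib]
  rw [e, Equiv.sum_comp σ2 r2, Equiv.sum_comp σ3 r3]
  have key2 : (∑ i : Fin (k + 2), (i : ℕ)) * 2 = (k + 2) * (k + 1) := by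
    rw [Fin.sum_univ_eq_sum_range (fun x => x) (k + 2), Finset.sum_range_id_mul_two]
    congr 1
  have h3s : ∑ i, r3 i = k + 2 := by
    rw [Finset.sum_eq_single (⟨0, by omega⟩ : Fin (k + 2))]
    · rw [h3]; simp
    · intro b _ hb
      rw [h3, if_neg (fun h0 => hb (Fin.ext h0))]
    · simp
  simp only [h1, h2]
  rw [Finset.sum_add_distrib, Finset.sum_add_distrib, h3s,
    Finset.sum_const, Finset.sum_const]
  simp only [Finset.card_univ, Fintype.card_fin, smul_eq_mul]
  have e1 : 2 * (k + 2) - 1 = 2 * k + 3 := by omega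
  have e2 : 4 * (k + 2) - 1 = 4 * k + 7 := by omega
  rw [e1, e2]
  nlinarith [key2]

/-- In the bad instance family for `m` machines, with rank `1` processing times
`2m-1, 2m, …, 3m-2`, rank `2` processing times `m, m+1, …, 2m-1`, and rank `3`
processing times `m, 0, …, 0`, there is a partition of the jobs into `m` triples,
one job from each rank, each triple summing to exactly `4m-1`; and hence `4m-1`
is the minimum makespan over all flowtime-optimal schedules (assignments of one
job of each rank to each machine). -/
theorem stmt_6 (m : ℕ) (hm : 2 ≤ m) (r1 r2 r3 : Fin m → ℕ)
    (h1 : ∀ i, r1 i = 2 * m - 1 + i)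
    (h2 : ∀ i, r2 i = m + i)
    (h3 : ∀ i, r3 i = if i.val = 0 then m else 0) :
    (∃ σ2 σ3 : Equiv.Perm (Fin m), ∀ i, r1 i + r2 (σ2 i) + r3 (σ3 i) = 4 * m - 1) ∧
      IsLeast {t : ℕ | ∃ σ2 σ3 : Equiv.Perm (Fin m),
        t = Finset.univ.sup (fun i => r1 i + r2 (σ2 i) + r3 (σ3 i))} (4 * m - 1) := by
  haveI : NeZero m := ⟨by omega⟩
  set σ2 : Equiv.Perm (Fin m) := Equiv.neg (Fin m) with hσ2
  have key : ∀ i, r1 i + r2 (σ2 i) + r3 i = 4 * m - 1 := by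
    intro i
    have hneg : ((σ2 i : Fin m) : ℕ) = (m - (i : ℕ)) % m := by
      simp [hσ2, Equiv.neg, Fin.neg_def]
    rw [h1, h2, h3, hneg]
    have him : (i : ℕ) < m := i.isLt
    rcases Nat.eq_zero_or_pos (i : ℕ) with h0 | h0
    · simp [h0]; omega
    · have : (m - (i : ℕ)) % m = m - (i : ℕ) := Nat.mod_eq_of_lt (by omega)
      rw [this, if_neg (by omega)]
      omega
  refine ⟨⟨σ2, 1, by simpa using key⟩, ?_, ?_⟩
  · refine ⟨σ2, 1, ?_⟩
    have : (Finset.univ.sup (fun i => r1 i + r2 (σ2 i) + r3 ((1 : Equiv.Perm (Fin m)) i)))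
        = Finset.univ.sup (fun _ : Fin m => 4 * m - 1) := by
      apply Finset.sup_congr rfl
      intro i _
      simpa using key i
    rw [this, Finset.sup_const Finset.univ_nonempty]
  · rintro t ⟨τ2, τ3, rfl⟩
    have hsum : ∑ i, (r1 i + r2 (τ2 i) + r3 (τ3 i)) = m * (4 * m - 1) :=
      stmt6_sum m hm r1 r2 r3 h1 h2 h3 τ2 τ3
    set S := Finset.univ.sup (fun i => r1 i + r2 (τ2 i) + r3 (τ3 i)) with hS
    have hle : ∑ i, (r1 i + r2 (τ2 i) + r3 (τ3 i)) ≤ m * S := by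
      calc ∑ i, (r1 i + r2 (τ2 i) + r3 (τ3 i)) ≤ ∑ _i : Fin m, S :=
            Finset.sum_le_sum (fun i _ =>
              Finset.le_sup (f := fun i => r1 i + r2 (τ2 i) + r3 (τ3 i))
                (Finset.mem_univ i))
        _ = m * S := by simp [mul_comm]
    have : m * (4 * m - 1) ≤ m * S := hsum ▸ hle
    exact Nat.le_of_mul_le_mul_left this (by omega)
end

section
/- Let m ≥ 4 be an integer and let λ_2 ≥ λ_3 ≥ λ_4 ≥ ... ≥ λ_k ≥ 0 be a nonincreasing sequence of reals (k ≥ 4). Then the two inequalities λ_2 > ((6m²-13m+4)/(3m²-10m+4))·λ_3 + ((m²-6m+2)/(3m²-10m+4))·λ_4 and λ_2 < ((4m-1)/(2(m-1)))·λ_3 - (1/2)·Σ_{r=4}^k λ_r together imply ((5m²+8m-7)/(m-1))·λ_3 < -(m²+2m+8)·λ_4 - (3m²-10m+4)·Σ_{r=5}^k λ_r, which is impossible since the left side is nonnegative and the right side is nonpositive; hence the two inequalities cannot both hold. -/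
/-- Let `m ≥ 4`, `k ≥ 4` be integers and `λ_2 ≥ λ_3 ≥ … ≥ λ_k ≥ 0` reals.  The
two inequalities
`λ_2 > ((6m²-13m+4)/(3m²-10m+4))λ_3 + ((m²-6m+2)/(3m²-10m+4))λ_4` and
`λ_2 < ((4m-1)/(2(m-1)))λ_3 - (1/2)∑_{r=4}^k λ_r`
together imply
`((5m²+8m-7)/(m-1))λ_3 < -(m²+2m+8)λ_4 - (3m²-10m+4)∑_{r=5}^k λ_r`,
which is impossible; hence the two inequalities cannot both hold. -/
theorem stmt_11 (m k : ℕ) (hm : 4 ≤ m) (hk : 4 ≤ k) (lam : ℕ → ℝ)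
    (hmono : ∀ r s, 2 ≤ r → r ≤ s → s ≤ k → lam s ≤ lam r)
    (hnonneg : ∀ r, 2 ≤ r → r ≤ k → 0 ≤ lam r) :
    (((((6 * m ^ 2 - 13 * m + 4 : ℝ)) / (3 * m ^ 2 - 10 * m + 4)) * lam 3
          + (((m : ℝ) ^ 2 - 6 * m + 2) / (3 * m ^ 2 - 10 * m + 4)) * lam 4 < lam 2 ∧
        lam 2 < ((4 * (m : ℝ) - 1) / (2 * (m - 1))) * lam 3
          - (1 / 2) * ∑ r ∈ Finset.Icc 4 k, lam r) →
      ((5 * (m : ℝ) ^ 2 + 8 * m - 7) / (m - 1)) * lam 3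
        < -((m : ℝ) ^ 2 + 2 * m + 8) * lam 4
          - (3 * (m : ℝ) ^ 2 - 10 * m + 4) * ∑ r ∈ Finset.Icc 5 k, lam r) ∧
    ¬ (((((6 * m ^ 2 - 13 * m + 4 : ℝ)) / (3 * m ^ 2 - 10 * m + 4)) * lam 3
          + (((m : ℝ) ^ 2 - 6 * m + 2) / (3 * m ^ 2 - 10 * m + 4)) * lam 4 < lam 2) ∧
        lam 2 < ((4 * (m : ℝ) - 1) / (2 * (m - 1))) * lam 3
          - (1 / 2) * ∑ r ∈ Finset.Icc 4 k, lam r) := by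

  have h4m : (4:ℝ) ≤ (m:ℝ) := by exact_mod_cast hm
  have hA : (0:ℝ) < 3 * (m:ℝ) ^ 2 - 10 * m + 4 := by nlinarith
  have hm1 : (0:ℝ) < 2 * ((m:ℝ) - 1) := by nlinarith
  have hins : Finset.Icc 4 k = insert 4 (Finset.Icc 5 k) := by
    ext x; simp [Finset.mem_Icc, Finset.mem_insert]; omega
  have hnotin : (4:ℕ) ∉ Finset.Icc 5 k := by simp
  have hsum : ∑ r ∈ Finset.Icc 4 k, lam r = lam 4 + ∑ r ∈ Finset.Icc 5 k, lam r := by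
    rw [hins, Finset.sum_insert hnotin]
  have hS5 : 0 ≤ ∑ r ∈ Finset.Icc 5 k, lam r :=
    Finset.sum_nonneg fun r hr => by
      simp only [Finset.mem_Icc] at hr
      exact hnonneg r (by omega) hr.2
  have h3 : 0 ≤ lam 3 := hnonneg 3 (by omega) (by omega)
  have h4 : 0 ≤ lam 4 := hnonneg 4 (by omega) (by omega)
  have h34 : lam 4 ≤ lam 3 := hmono 3 4 (by omega) (by omega) (by omega)
  have hfalse : ¬ (((((6 * m ^ 2 - 13 * m + 4 : ℝ)) / (3 * m ^ 2 - 10 * m + 4)) * lam 3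
          + (((m : ℝ) ^ 2 - 6 * m + 2) / (3 * m ^ 2 - 10 * m + 4)) * lam 4 < lam 2) ∧
        lam 2 < ((4 * (m : ℝ) - 1) / (2 * (m - 1))) * lam 3
          - (1 / 2) * ∑ r ∈ Finset.Icc 4 k, lam r) := by
    rintro ⟨h1, h2⟩
    rw [hsum] at h2
    have key1 : ((6 * (m:ℝ) ^ 2 - 13 * m + 4) / (3 * (m:ℝ) ^ 2 - 10 * m + 4)) * lam 3
        + (((m : ℝ) ^ 2 - 6 * m + 2) / (3 * (m:ℝ) ^ 2 - 10 * m + 4)) * lam 4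
        = ((6 * (m:ℝ) ^ 2 - 13 * m + 4) * lam 3 + ((m:ℝ) ^ 2 - 6 * m + 2) * lam 4)
          / (3 * (m:ℝ) ^ 2 - 10 * m + 4) := by ring
    rw [key1, div_lt_iff₀ hA] at h1
    have key2 : ((4 * (m : ℝ) - 1) / (2 * ((m:ℝ) - 1))) * lam 3
        - (1 / 2) * (lam 4 + ∑ r ∈ Finset.Icc 5 k, lam r)
        = ((4 * (m:ℝ) - 1) * lam 3 - ((m:ℝ) - 1) * (lam 4 + ∑ r ∈ Finset.Icc 5 k, lam r))
          / (2 * ((m:ℝ) - 1)) := by field_simp [show (m:ℝ) - 1 ≠ 0 by linarith]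
    rw [key2, lt_div_iff₀ hm1] at h2
    nlinarith [mul_nonneg (mul_nonneg (sub_nonneg.mpr h4m) h4) (sub_nonneg.mpr h4m),
      mul_nonneg (sub_nonneg.mpr h4m) h4, mul_nonneg (sub_nonneg.mpr h4m) h3,
      mul_nonneg (mul_nonneg hA.le hm1.le) hS5, mul_pos hA hm1,
      mul_nonneg (mul_nonneg (sub_nonneg.mpr h4m) (sub_nonneg.mpr h4m)) h4,
      mul_lt_mul_of_pos_left h1 hm1, mul_lt_mul_of_pos_left h2 hA]
  exact ⟨fun h => absurd h hfalse, hfalse⟩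
end

section
/- In an LD schedule on m machines, consider one rank: if a ∈ ℝ^m is the sorted (nonincreasing) current profile of machine completion times and p, p' ∈ ℝ^m are sorted nonincreasing processing-time vectors of the next rank with p'_i ≥ p_i for all i, then the sorted vector of sums (a_i + p_{m+1-i}) is componentwise dominated by the sorted vector of sums (a_i + p'_{m+1-i}). -/
/-- One-rank monotonicity of the LD profile: let `a` be the sorted
(nonincreasing) current profile and `p ≤ p'` two sorted nonincreasing
processing-time vectors for the next rank.  LD matches the largest processing
time with the smallest profile element, producing the load vectors
`s i = a i + p (rev i)` and `s' i = a i + p' (rev i)`.  Then the sorted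
(nonincreasing) version of `s'` dominates the sorted version of `s`
componentwise. -/
theorem stmt_17 (m : ℕ) (hm : 1 ≤ m) (a p p' : Fin m → ℝ)
    (ha : Antitone a) (hp : Antitone p) (hp' : Antitone p')
    (hle : ∀ i, p i ≤ p' i)
    (s s' : Fin m → ℝ)
    (hs : ∀ i, s i = a i + p (Fin.rev i))
    (hs' : ∀ i, s' i = a i + p' (Fin.rev i)) :
    ∀ σ τ : Equiv.Perm (Fin m), Antitone (s ∘ σ) → Antitone (s' ∘ τ) →
      ∀ i, s (σ i) ≤ s' (τ i) := by
  intro σ τ hσ hτ i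
  have hss' : ∀ j, s j ≤ s' j := by
    intro j; rw [hs, hs']; exact add_le_add le_rfl (hle _)
  -- A = positions ≤ i under σ, B = positions ≥ i under τ; they intersect.
  set A : Finset (Fin m) := (Finset.Iic i).image σ with hA
  set B : Finset (Fin m) := (Finset.Ici i).image τ with hB
  have hAcard : A.card = (Finset.Iic i).card := Finset.card_image_of_injective _ σ.injective
  have hBcard : B.card = (Finset.Ici i).card := Finset.card_image_of_injective _ τ.injective
  have hsum : m < A.card + B.card := by
    rw [hAcard, hBcard]
    have h1 := i.isLt
    rw [Fin.card_Iic, Fin.card_Ici]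
    omega
  have hinter : (A ∩ B).Nonempty := by
    rw [← Finset.card_pos]
    have h := Finset.card_inter_add_card_union A B
    have hU : (A ∪ B).card ≤ m := by
      simpa using Finset.card_le_card (Finset.subset_univ (A ∪ B))
    omega
  obtain ⟨j, hj⟩ := hinter
  obtain ⟨hjA, hjB⟩ := Finset.mem_inter.mp hj
  obtain ⟨k, hk, hkj⟩ := Finset.mem_image.mp hjA
  obtain ⟨l, hl, hlj⟩ := Finset.mem_image.mp hjB
  have h1 : s (σ i) ≤ s (σ k) := hσ (Finset.mem_Iic.mp hk)
  have h2 : s' (τ l) ≤ s' (τ i) := hτ (Finset.mem_Ici.mp hl)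
  calc s (σ i) ≤ s (σ k) := h1
    _ = s j := by rw [hkj]
    _ ≤ s' j := hss' j
    _ = s' (τ l) := by rw [hlj]
    _ ≤ s' (τ i) := h2
end
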